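/- The number 1560 does not belong to A = {10a + 11b : a ≥ 1, b ≥ 2a+1, gcd(a,b) = 1}, and 1560 is the largest element of C₂ = {20 + 11k : k ≥ 0} not in A. -/

import Mathlib

/-!
With a = 2 + 11t and b = k - 10t we get 10a + 11b = 20 + 11k, and the conditions on (a, b)
become 32t + 5 ≤ k and gcd(2 + 11t, 20 + 11k) = 1; conversely a ≡ 2 (mod 11) is forced, which
for 1560 leaves a ∈ {2, 13, 24, 35, 46}, each sharing a factor with b.

For odd k take t = 0. For even k every prime p ∤ 11 excludes one residue class of t modulo p
(those with p ∣ 2 + 11t), and a Jacobsthal-type sieve over 2, 3, 5 and the r primes p ≥ 7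
dividing n = 20 + 11k finds an admissible t with 352(t + 1) ≤ n. If r ≤ 6, count: among
30(r + 1) consecutive t, 8(r + 1) avoid the classes mod 2, 3, 5, and each large prime removes
at most 8 of them. If r > 6, fix one large prime q and a residue c ∈ {0, 1} it allows; the
substitution t = c + qs turns the problem into one for the other primes, whose bound grows by
the factor q that n gains. Small k are checked by computation.
-/

def A : Set ℕ := {n | ∃ a b : ℕ, n = 10 * a + 11 * b ∧ 1 ≤ a ∧ 2 * a + 1 ≤ b ∧ Nat.gcd a b = 1}

open Finset Nat

theorem Nat.count_coprime_add_mul (m u : ℕ) [NeZero m] {v : ℕ} (hv : v.Coprime m) :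
    count (fun t => (u + v * t).Coprime m) m = φ m := by
  rw [count_eq_card_filter_range, ← ZMod.card_units_eq_totient, ← Finset.card_univ]
  have hvu : IsUnit (v : ZMod m) := (ZMod.isUnit_iff_coprime v m).2 hv
  refine card_bij (fun t ht => ZMod.unitOfCoprime _ (mem_filter.1 ht).2)
    (fun _ _ => mem_univ _) ?_ ?_
  · intro t₁ h₁ t₂ h₂ h
    have h' := congrArg (fun w : (ZMod m)ˣ => (w : ZMod m)) h
    simp only [ZMod.coe_unitOfCoprime, Nat.cast_add, Nat.cast_mul, add_right_inj] at h'
    have := (ZMod.natCast_eq_natCast_iff' _ _ _).1 (hvu.mul_left_cancel h')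
    rwa [Nat.mod_eq_of_lt (mem_range.1 (mem_filter.1 h₁).1),
      Nat.mod_eq_of_lt (mem_range.1 (mem_filter.1 h₂).1)] at this
  · intro w _
    set t := (((w : ZMod m) - u) * hvu.unit⁻¹).val
    have ht : (u + v * t : ℕ) = (w : ZMod m) := by
      rw [Nat.cast_add, Nat.cast_mul, ZMod.natCast_val, ZMod.cast_id, mul_left_comm,
        hvu.mul_val_inv, mul_one, add_sub_cancel]
    refine ⟨t, mem_filter.2 ⟨mem_range.2 (ZMod.val_lt _), ?_⟩, Units.ext (by simpa using ht)⟩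
    exact (ZMod.isUnit_iff_coprime _ m).1 (ht ▸ w.isUnit)

theorem Nat.count_coprime_add_mul_mul (m u K : ℕ) [NeZero m] {v : ℕ} (hv : v.Coprime m) :
    count (fun t => (u + v * t).Coprime m) (m * K) = φ m * K := by
  induction K with
  | zero => simp
  | succ K ih =>
    rw [mul_add_one, count_add, ih, mul_add_one, add_right_inj]
    simp only [mul_add, ← add_assoc]
    exact count_coprime_add_mul _ _ hv

theorem Nat.Prime.modEq_of_dvd_add_mul {q u v t₁ t₂ : ℕ} (hq : q.Prime) (hv : ¬ q ∣ v)
    (h₁ : q ∣ u + v * t₁) (h₂ : q ∣ u + v * t₂) : t₁ ≡ t₂ [MOD q] := by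
  have := Fact.mk hq
  rw [← ZMod.natCast_eq_natCast_iff]
  rw [← ZMod.natCast_eq_zero_iff] at h₁ h₂ hv
  push_cast at h₁ h₂
  exact mul_left_cancel₀ hv (by linear_combination h₁ - h₂)

theorem Nat.Prime.coprime_thirty {p : ℕ} (hp : p.Prime) (h7 : 7 ≤ p) : p.Coprime 30 := by
  refine hp.coprime_iff_not_dvd.2 fun h => ?_
  have : p ≤ 30 := Nat.le_of_dvd (by norm_num) h
  interval_cases p <;> first | omega | norm_num at hp

/- The t in question all lie in one residue class c mod q, and t ↦ t / q sends them into
`range m`, where they satisfy a coprimality condition for the affine form t ↦ u + v (c + q t). -/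
theorem card_filter_coprime_dvd_le {m q u v L : ℕ} [NeZero m] (hq : q.Prime) (hqv : ¬ q ∣ v)
    (hvm : v.Coprime m) (hqm : q.Coprime m) (hL : L ≤ m * q) :
    #{t ∈ range L | (u + v * t).Coprime m ∧ q ∣ u + v * t} ≤ φ m := by
  set S := {t ∈ range L | (u + v * t).Coprime m ∧ q ∣ u + v * t}
  rcases S.eq_empty_or_nonempty with hS | ⟨t₀, ht₀⟩
  · simp [hS]
  set c := t₀ % q
  calc #S ≤ #(({s ∈ range m | (u + v * c + v * q * s).Coprime m}).image (c + q * ·)) := by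
        refine card_le_card fun t ht => ?_
        simp only [S, mem_filter, mem_range] at ht ht₀
        have htc : t % q = c := hq.modEq_of_dvd_add_mul hqv ht.2.2 ht₀.2.2
        have hdecomp : c + q * (t / q) = t := by rw [← htc, Nat.mod_add_div]
        refine mem_image.2 ⟨t / q, mem_filter.2 ⟨?_, ?_⟩, hdecomp⟩
        · exact mem_range.2 ((Nat.div_lt_iff_lt_mul hq.pos).2 (by linarith))
        · rw [← hdecomp] at ht
          rw [show u + v * c + v * q * (t / q) = u + v * (c + q * (t / q)) by ring]
          exact ht.2.1
    _ ≤ #{s ∈ range m | (u + v * c + v * q * s).Coprime m} := card_image_le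
    _ = φ m := by rw [← count_eq_card_filter_range, count_coprime_add_mul _ _ (hvm.mul_left hqm)]

/- Of the m (#P + 1) values t < m (#P + 1), exactly φ m (#P + 1) make u + v t coprime to m, and
each q ∈ P divides u + v t for at most φ m of those. -/
theorem exists_lt_coprime_mul_prod {m v : ℕ} [NeZero m] (u : ℕ) {P : Finset ℕ}
    (hP : ∀ p ∈ P, p.Prime ∧ #P < p ∧ p.Coprime m ∧ ¬ p ∣ v) (hv : v.Coprime m) :
    ∃ t < m * (#P + 1), (u + v * t).Coprime (m * ∏ p ∈ P, p) := by
  set L := m * (#P + 1)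
  by_contra! h
  have hcover : {t ∈ range L | (u + v * t).Coprime m} ⊆
      P.biUnion fun q => {t ∈ range L | (u + v * t).Coprime m ∧ q ∣ u + v * t} := by
    intro t ht
    rw [mem_filter, mem_range] at ht
    by_contra hnot
    simp only [mem_biUnion, mem_filter, mem_range, not_exists, not_and] at hnot
    refine h t ht.1 (ht.2.mul_right (Nat.Coprime.prod_right fun q hq => ?_))
    exact ((hP q hq).1.coprime_iff_not_dvd.2 (hnot q hq ht.1 ht.2)).symm
  have hle := (card_le_card hcover).trans card_biUnion_le
  rw [← count_eq_card_filter_range, count_coprime_add_mul_mul _ _ _ hv] at hle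
  have hsum : ∑ q ∈ P, #{t ∈ range L | (u + v * t).Coprime m ∧ q ∣ u + v * t} ≤ #P * φ m := by
    rw [← smul_eq_mul, ← sum_const]
    refine sum_le_sum fun q hq => ?_
    obtain ⟨hq, hcard, hqm, hqv⟩ := hP q hq
    exact card_filter_coprime_dvd_le hq hqv hv hqm (Nat.mul_le_mul_left m hcard)
  have hφ : 0 < φ m := totient_pos.2 (NeZero.pos m)
  nlinarith

theorem exists_not_dvd_add_mul_of_le_one {q v : ℕ} (u : ℕ) (hv : ¬ q ∣ v) :
    ∃ c ≤ 1, ¬ q ∣ u + v * c := by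
  by_contra! h
  exact hv ((Nat.dvd_add_right (by simpa using h 0 zero_le_one)).1 (by simpa using h 1 le_rfl))

/- 176 = 352 / 2, as 2 ∏ P divides n in the application. -/
theorem exists_coprime_thirty_mul_prod_of_six_le_card (P : Finset ℕ) {v : ℕ} (u : ℕ)
    (hP : ∀ p ∈ P, p.Prime ∧ 7 ≤ p ∧ ¬ p ∣ v) (hv : v.Coprime 30) (hcard : 6 ≤ #P) :
    ∃ t, 176 * (t + 1) ≤ ∏ p ∈ P, p ∧ (u + v * t).Coprime (30 * ∏ p ∈ P, p) := by
  induction P using Finset.induction_on generalizing u v with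
  | empty => simp at hcard
  | insert q P hqP ih =>
    rcases lt_or_ge #P 6 with hsmall | hlarge
    · have hcard6 : #(insert q P) = 6 := by rw [card_insert_of_notMem hqP] at hcard ⊢; omega
      obtain ⟨t, ht, hcop⟩ := exists_lt_coprime_mul_prod u (P := insert q P) (fun p hp =>
        ⟨(hP p hp).1, hcard6 ▸ (hP p hp).2.1, (hP p hp).1.coprime_thirty (hP p hp).2.1,
          (hP p hp).2.2⟩) hv
      have hprod : 7 ^ 6 ≤ ∏ p ∈ insert q P, p := by
        simpa [hcard6] using pow_card_le_prod (insert q P) id 7 fun p hp => (hP p hp).2.1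
      exact ⟨t, by omega, hcop⟩
    · obtain ⟨hq, hq7, hqv⟩ := hP q (mem_insert_self q P)
      obtain ⟨c, hc, hqc⟩ := exists_not_dvd_add_mul_of_le_one u hqv
      have hP' : ∀ p ∈ P, p.Prime ∧ 7 ≤ p ∧ ¬ p ∣ v * q := fun p hpP => by
        obtain ⟨hp, hp7, hpv⟩ := hP p (mem_insert_of_mem hpP)
        refine ⟨hp, hp7, fun h => (hp.dvd_mul.1 h).elim hpv fun hpq => ?_⟩
        exact hqP ((Nat.prime_dvd_prime_iff_eq hp hq).1 hpq ▸ hpP)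
      obtain ⟨s, hs, hcop⟩ :=
        ih (u + v * c) hP' (hv.mul_left (hq.coprime_thirty hq7)) hlarge
      refine ⟨c + q * s, ?_, ?_⟩
      · rw [prod_insert hqP]
        nlinarith
      · have hform : u + v * (c + q * s) = u + v * c + v * q * s := by ring
        have hqform : ¬ q ∣ u + v * (c + q * s) := by
          rwa [hform, Nat.dvd_add_left ⟨v * s, by ring⟩]
        rw [prod_insert hqP, mul_left_comm]
        exact ((hq.coprime_iff_not_dvd.2 hqform).symm).mul_right (hform ▸ hcop)

theorem Nat.Coprime.of_coprime_thirty_mul_prod {a n : ℕ} (hn : n ≠ 0)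
    (ha : a.Coprime (30 * ∏ p ∈ n.primeFactors with 7 ≤ p, p)) : a.Coprime n := by
  refine Nat.coprime_of_dvd fun p hp hpa hpn => hp.one_lt.ne' (eq_one_of_dvd_coprimes ha hpa ?_)
  rcases lt_or_ge p 7 with h | h
  · refine dvd_mul_of_dvd_left ?_ _
    interval_cases p <;> first | omega | norm_num at hp
  · exact dvd_mul_of_dvd_right
      (dvd_prod_of_mem _ (mem_filter.2 ⟨mem_primeFactors.2 ⟨hp, hpn, hn⟩, h⟩)) _

theorem mem_A_of_coprime {k t : ℕ} (h : 32 * t + 5 ≤ k)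
    (hcop : (2 + 11 * t).Coprime (20 + 11 * k)) : 20 + 11 * k ∈ A := by
  refine ⟨2 + 11 * t, k - 10 * t, by omega, by omega, by omega, ?_⟩
  rw [show 20 + 11 * k = 11 * (k - 10 * t) + (2 + 11 * t) * 10 by omega,
    Nat.coprime_add_mul_left_right] at hcop
  exact hcop.coprime_mul_left_right

set_option maxRecDepth 100000 in
theorem mem_A_of_lt {k : ℕ} (h₁ : 141 ≤ k) (h₂ : k < 5759) : 20 + 11 * k ∈ A := by
  have H : ((List.range' 141 (5759 - 141)).all fun k => (List.range 10).any fun t =>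
      32 * t + 5 ≤ k && Nat.gcd (2 + 11 * t) (20 + 11 * k) == 1) = true := by
    decide
  simp only [List.all_eq_true, List.any_eq_true, List.mem_range', List.mem_range,
    Bool.and_eq_true, decide_eq_true_eq, beq_iff_eq] at H
  obtain ⟨t, -, ht, hgcd⟩ := H k ⟨k - 141, by omega, by omega⟩
  exact mem_A_of_coprime ht hgcd

theorem mem_A_of_odd {k : ℕ} (hk : Odd k) (h : 5 ≤ k) : 20 + 11 * k ∈ A :=
  mem_A_of_coprime (t := 0) h
    (coprime_two_left.2 (Nat.odd_iff.2 (by have := Nat.odd_iff.1 hk; omega)))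

theorem mem_A_of_even {k : ℕ} (hk : Even k) (hbig : 5759 ≤ k) : 20 + 11 * k ∈ A := by
  set n := 20 + 11 * k
  set P := {p ∈ n.primeFactors | 7 ≤ p}
  have hP : ∀ p ∈ P, p.Prime ∧ 7 ≤ p ∧ ¬ p ∣ 11 := by
    intro p hpP
    obtain ⟨hpn, hp7⟩ := mem_filter.1 hpP
    have hp := prime_of_mem_primeFactors hpn
    refine ⟨hp, hp7, fun h => ?_⟩
    obtain rfl := (Nat.prime_dvd_prime_iff_eq hp (by norm_num)).1 h
    have := dvd_of_mem_primeFactors hpn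
    omega
  have h11 : Nat.Coprime 11 30 := by norm_num
  rcases lt_or_ge #P 6 with hsmall | hlarge
  · obtain ⟨t, ht, hcop⟩ := exists_lt_coprime_mul_prod 2 (P := P) (fun p hp =>
      ⟨(hP p hp).1, by have := (hP p hp).2.1; omega, (hP p hp).1.coprime_thirty (hP p hp).2.1,
        (hP p hp).2.2⟩) h11
    exact mem_A_of_coprime (t := t) (by omega) (hcop.of_coprime_thirty_mul_prod (by omega))
  · obtain ⟨t, ht, hcop⟩ := exists_coprime_thirty_mul_prod_of_six_le_card P 2 hP h11 hlarge
    have h2P : 2 * ∏ p ∈ P, p ∣ n := by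
      refine Nat.Coprime.mul_dvd_of_dvd_of_dvd (Nat.Coprime.prod_right fun p hp => ?_)
        (by rw [even_iff_two_dvd] at hk; omega)
        ((prod_dvd_prod_of_subset _ _ _ (filter_subset _ _)).trans (prod_primeFactors_dvd n))
      exact (Nat.coprime_primes prime_two (hP p hp).1).2 (by have := (hP p hp).2.1; omega)
    have := Nat.le_of_dvd (by omega) h2P
    exact mem_A_of_coprime (t := t) (by omega) (hcop.of_coprime_thirty_mul_prod (by omega))

theorem stmt_16 : 1560 ∉ A ∧
    ∀ n : ℕ, (∃ k : ℕ, n = 20 + 11 * k) → 1560 < n → n ∈ A := by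
  refine ⟨?_, ?_⟩
  · rintro ⟨a, b, hn, ha, hab, hgcd⟩
    obtain rfl : b = (1560 - 10 * a) / 11 := by omega
    have : a ≤ 48 := by omega
    interval_cases a <;> first | omega | norm_num at hgcd
  · rintro n ⟨k, rfl⟩ hn
    rcases lt_or_ge k 5759 with hsmall | hbig
    · exact mem_A_of_lt (by omega) hsmall
    rcases Nat.even_or_odd k with heven | hodd
    · exact mem_A_of_even heven hbig
    · exact mem_A_of_odd hodd (by omega)
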